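/- With the same rigged hypersurface setup, the Codazzi-1 equation holds: n(R(e_b, e_c)e_a) = ∇̄_c K_{ba} - ∇̄_b K_{ca} + K_{ba} φ_c - K_{ca} φ_b, where φ_a = n(∇_{e_a} ℓ). -/

import Mathlib

noncomputable section

/-- Partial derivative in the `a`-th coordinate direction on `ℝ³`. -/
def pd (f : (Fin 3 → ℝ) → ℝ) (a : Fin 3) (ξ : Fin 3 → ℝ) : ℝ :=
  fderiv ℝ f ξ (Pi.single a 1)

/-- Ambient covariant derivative along `e a` of an ambient vector field along Σ. -/
def cov (Ch : (Fin 3 → ℝ) → Fin 4 → Fin 4 → Fin 4 → ℝ)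
    (e : Fin 3 → (Fin 3 → ℝ) → Fin 4 → ℝ)
    (a : Fin 3) (V : (Fin 3 → ℝ) → Fin 4 → ℝ) (ξ : Fin 3 → ℝ) (μ : Fin 4) : ℝ :=
  pd (fun ζ => V ζ μ) a ξ + ∑ ν, ∑ ρ, Ch ξ μ ν ρ * e a ξ ν * V ξ ρ

/-- Christoffel symbols `Γ̄^c_{ba} = ω^c(∇_{e_a} e_b)` of the rigged connection. -/
def Gbar (Ch : (Fin 3 → ℝ) → Fin 4 → Fin 4 → Fin 4 → ℝ)
    (e : Fin 3 → (Fin 3 → ℝ) → Fin 4 → ℝ)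
    (ω : Fin 3 → (Fin 3 → ℝ) → Fin 4 → ℝ)
    (c b a : Fin 3) (ξ : Fin 3 → ℝ) : ℝ :=
  ∑ μ, ω c ξ μ * cov Ch e a (e b) ξ μ

/-- Second fundamental form `K_{ab} = -n(∇_{e_a} e_b)`. -/
def sff (Ch : (Fin 3 → ℝ) → Fin 4 → Fin 4 → Fin 4 → ℝ)
    (e : Fin 3 → (Fin 3 → ℝ) → Fin 4 → ℝ)
    (n : (Fin 3 → ℝ) → Fin 4 → ℝ) (a b : Fin 3) (ξ : Fin 3 → ℝ) : ℝ :=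
  -∑ μ, n ξ μ * cov Ch e a (e b) ξ μ

/-- The one-form `φ_a = n(∇_{e_a} ℓ)`. -/
def phiF (Ch : (Fin 3 → ℝ) → Fin 4 → Fin 4 → Fin 4 → ℝ)
    (e : Fin 3 → (Fin 3 → ℝ) → Fin 4 → ℝ)
    (n ℓ : (Fin 3 → ℝ) → Fin 4 → ℝ) (a : Fin 3) (ξ : Fin 3 → ℝ) : ℝ :=
  ∑ μ, n ξ μ * cov Ch e a ℓ ξ μ

/-- Rigged covariant derivative `(∇̄_c K)_{ab}` of a 2-covariant tensor on Σ,
for a connection with coefficients `Cb ξ f a c = Γ̄^f_{ac}`. -/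
def DbarT2 (Cb : (Fin 3 → ℝ) → Fin 3 → Fin 3 → Fin 3 → ℝ)
    (K : (Fin 3 → ℝ) → Fin 3 → Fin 3 → ℝ) (c a b : Fin 3) (ξ : Fin 3 → ℝ) : ℝ :=
  pd (fun ζ => K ζ a b) c ξ - (∑ f, Cb ξ f a c * K ξ f b)
    - ∑ f, Cb ξ f b c * K ξ a f

lemma contDiff_pd {f : (Fin 3 → ℝ) → ℝ} (hf : ContDiff ℝ (⊤ : ℕ∞) f) (a : Fin 3) :
    ContDiff ℝ (⊤ : ℕ∞) (fun ξ => pd f a ξ) := by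
  unfold pd
  exact (hf.fderiv_right (m := (⊤ : ℕ∞)) (by simp)).clm_apply contDiff_const

lemma pd_mul {f g : (Fin 3 → ℝ) → ℝ} {ξ : Fin 3 → ℝ} (a : Fin 3)
    (hf : DifferentiableAt ℝ f ξ) (hg : DifferentiableAt ℝ g ξ) :
    pd (fun ζ => f ζ * g ζ) a ξ = pd f a ξ * g ξ + f ξ * pd g a ξ := by
  unfold pd
  rw [fderiv_fun_mul hf hg]
  simp only [ContinuousLinearMap.add_apply, ContinuousLinearMap.smul_apply, smul_eq_mul]
  ring

lemma pd_sub {f g : (Fin 3 → ℝ) → ℝ} {ξ : Fin 3 → ℝ} (a : Fin 3)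
    (hf : DifferentiableAt ℝ f ξ) (hg : DifferentiableAt ℝ g ξ) :
    pd (fun ζ => f ζ - g ζ) a ξ = pd f a ξ - pd g a ξ := by
  unfold pd
  rw [fderiv_fun_sub hf hg]
  simp

lemma pd_sum {ι : Type*} {s : Finset ι} {f : ι → (Fin 3 → ℝ) → ℝ} {ξ : Fin 3 → ℝ} (a : Fin 3)
    (hf : ∀ i ∈ s, DifferentiableAt ℝ (f i) ξ) :
    pd (fun ζ => ∑ i ∈ s, f i ζ) a ξ = ∑ i ∈ s, pd (f i) a ξ := by
  unfold pd
  rw [fderiv_fun_sum hf]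
  simp

section
variable (Ch : (Fin 3 → ℝ) → Fin 4 → Fin 4 → Fin 4 → ℝ)
    (e : Fin 3 → (Fin 3 → ℝ) → Fin 4 → ℝ)
    (ℓ n : (Fin 3 → ℝ) → Fin 4 → ℝ)
    (ω : Fin 3 → (Fin 3 → ℝ) → Fin 4 → ℝ)

lemma contDiff_cov (hChs : ∀ α β γ, ContDiff ℝ (⊤ : ℕ∞) (fun ζ => Ch ζ α β γ))
    (he : ∀ a μ, ContDiff ℝ (⊤ : ℕ∞) (fun ζ => e a ζ μ))
    {V : (Fin 3 → ℝ) → Fin 4 → ℝ} (hV : ∀ ρ, ContDiff ℝ (⊤ : ℕ∞) (fun ζ => V ζ ρ))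
    (a : Fin 3) (μ : Fin 4) :
    ContDiff ℝ (⊤ : ℕ∞) (fun ζ => cov Ch e a V ζ μ) := by
  unfold cov
  refine (contDiff_pd (hV μ) a).add ?_
  exact ContDiff.sum fun ν _ => ContDiff.sum fun ρ _ =>
    ((hChs μ ν ρ).mul (he a ν)).mul (hV ρ)

lemma contDiff_Gbar (hChs : ∀ α β γ, ContDiff ℝ (⊤ : ℕ∞) (fun ζ => Ch ζ α β γ))
    (he : ∀ a μ, ContDiff ℝ (⊤ : ℕ∞) (fun ζ => e a ζ μ))
    (hωs : ∀ a μ, ContDiff ℝ (⊤ : ℕ∞) (fun ζ => ω a ζ μ))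
    (c b a : Fin 3) : ContDiff ℝ (⊤ : ℕ∞) (fun ζ => Gbar Ch e ω c b a ζ) := by
  unfold Gbar
  exact ContDiff.sum fun μ _ => (hωs c μ).mul (contDiff_cov Ch e hChs he (he b) a μ)

lemma contDiff_sff (hChs : ∀ α β γ, ContDiff ℝ (⊤ : ℕ∞) (fun ζ => Ch ζ α β γ))
    (he : ∀ a μ, ContDiff ℝ (⊤ : ℕ∞) (fun ζ => e a ζ μ))
    (hns : ∀ μ, ContDiff ℝ (⊤ : ℕ∞) (fun ζ => n ζ μ))
    (a b : Fin 3) : ContDiff ℝ (⊤ : ℕ∞) (fun ζ => sff Ch e n a b ζ) := by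
  unfold sff
  exact (ContDiff.sum fun μ _ => (hns μ).mul (contDiff_cov Ch e hChs he (he b) a μ)).neg

lemma covsym (hChsym : ∀ ξ α β γ, Ch ξ α β γ = Ch ξ α γ β)
    (hesym : ∀ ξ a b μ, pd (fun ζ => e b ζ μ) a ξ = pd (fun ζ => e a ζ μ) b ξ)
    (ξ : Fin 3 → ℝ) (a b : Fin 3) (μ : Fin 4) :
    cov Ch e a (e b) ξ μ = cov Ch e b (e a) ξ μ := by
  unfold cov
  rw [hesym ξ a b μ]
  congr 1
  rw [Finset.sum_comm]
  refine Finset.sum_congr rfl fun ν _ => Finset.sum_congr rfl fun ρ _ => ?_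
  rw [hChsym ξ μ ν ρ]; ring

lemma decomp
    (hcomp : ∀ ξ μ ν, ℓ ξ μ * n ξ ν + ∑ a, e a ξ μ * ω a ξ ν
      = if μ = ν then (1 : ℝ) else 0)
    (c a : Fin 3) (ζ : Fin 3 → ℝ) (ν : Fin 4) :
    cov Ch e c (e a) ζ ν
      = (∑ f, Gbar Ch e ω f a c ζ * e f ζ ν) - sff Ch e n c a ζ * ℓ ζ ν := by
  have h : cov Ch e c (e a) ζ ν
      = ∑ μ, (if ν = μ then (1:ℝ) else 0) * cov Ch e c (e a) ζ μ := by simp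
  rw [h]
  simp_rw [← hcomp ζ ν]
  unfold Gbar sff
  simp only [Fin.sum_univ_four, Fin.sum_univ_three]
  ring

lemma cov_expand
    (hChs : ∀ α β γ, ContDiff ℝ (⊤ : ℕ∞) (fun ζ => Ch ζ α β γ))
    (he : ∀ a μ, ContDiff ℝ (⊤ : ℕ∞) (fun ζ => e a ζ μ))
    (hℓs : ∀ μ, ContDiff ℝ (⊤ : ℕ∞) (fun ζ => ℓ ζ μ))
    (G : Fin 3 → (Fin 3 → ℝ) → ℝ) (S : (Fin 3 → ℝ) → ℝ)
    (hG : ∀ f, ContDiff ℝ (⊤ : ℕ∞) (G f)) (hS : ContDiff ℝ (⊤ : ℕ∞) S)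
    (b : Fin 3) (ξ : Fin 3 → ℝ) (μ : Fin 4) :
    cov Ch e b (fun ζ ν => (∑ f, G f ζ * e f ζ ν) - S ζ * ℓ ζ ν) ξ μ
      = (∑ f, (pd (G f) b ξ * e f ξ μ + G f ξ * cov Ch e b (e f) ξ μ))
        - (pd S b ξ * ℓ ξ μ + S ξ * cov Ch e b ℓ ξ μ) := by
  have dG : ∀ f, DifferentiableAt ℝ (G f) ξ :=
    fun f => ((hG f).differentiable (by simp)).differentiableAt
  have de : ∀ f ν, DifferentiableAt ℝ (fun ζ => e f ζ ν) ξ :=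
    fun f ν => ((he f ν).differentiable (by simp)).differentiableAt
  have dℓ : ∀ ν, DifferentiableAt ℝ (fun ζ => ℓ ζ ν) ξ :=
    fun ν => ((hℓs ν).differentiable (by simp)).differentiableAt
  have dS : DifferentiableAt ℝ S ξ := (hS.differentiable (by simp)).differentiableAt
  unfold cov
  have h1 : pd (fun ζ => (∑ f, G f ζ * e f ζ μ) - S ζ * ℓ ζ μ) b ξ
      = (∑ f, (pd (G f) b ξ * e f ξ μ + G f ξ * pd (fun ζ => e f ζ μ) b ξ))
        - (pd S b ξ * ℓ ξ μ + S ξ * pd (fun ζ => ℓ ζ μ) b ξ) := by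
    rw [pd_sub b (DifferentiableAt.fun_sum fun f _ => (dG f).fun_mul (de f μ)) (dS.fun_mul (dℓ μ)),
      pd_sum b (fun f _ => (dG f).fun_mul (de f μ)), pd_mul b dS (dℓ μ)]
    congr 1
    exact Finset.sum_congr rfl fun f _ => pd_mul b (dG f) (de f μ)
  simp only []
  rw [h1]
  unfold pd
  simp only [Fin.sum_univ_four, Fin.sum_univ_three]
  ring

lemma key
    (hChs : ∀ α β γ, ContDiff ℝ (⊤ : ℕ∞) (fun ζ => Ch ζ α β γ))
    (he : ∀ a μ, ContDiff ℝ (⊤ : ℕ∞) (fun ζ => e a ζ μ))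
    (hℓs : ∀ μ, ContDiff ℝ (⊤ : ℕ∞) (fun ζ => ℓ ζ μ))
    (hns : ∀ μ, ContDiff ℝ (⊤ : ℕ∞) (fun ζ => n ζ μ))
    (hωs : ∀ a μ, ContDiff ℝ (⊤ : ℕ∞) (fun ζ => ω a ζ μ))
    (hne : ∀ ξ a, ∑ μ, n ξ μ * e a ξ μ = 0)
    (hnl : ∀ ξ, ∑ μ, n ξ μ * ℓ ξ μ = 1)
    (hcomp : ∀ ξ μ ν, ℓ ξ μ * n ξ ν + ∑ a, e a ξ μ * ω a ξ ν
      = if μ = ν then (1 : ℝ) else 0)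
    (ξ : Fin 3 → ℝ) (b c a : Fin 3) :
    ∑ μ, n ξ μ * cov Ch e b (cov Ch e c (e a)) ξ μ
      = -(∑ f, Gbar Ch e ω f a c ξ * sff Ch e n b f ξ)
        - pd (fun ζ => sff Ch e n c a ζ) b ξ
        - sff Ch e n c a ξ * phiF Ch e n ℓ b ξ := by
  have hW : cov Ch e c (e a)
      = fun ζ ν => (∑ f, (fun f ζ => Gbar Ch e ω f a c ζ) f ζ * e f ζ ν)
          - (fun ζ => sff Ch e n c a ζ) ζ * ℓ ζ ν :=
    funext fun ζ => funext fun ν => decomp Ch e ℓ n ω hcomp c a ζ ν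
  rw [hW]
  have hx := cov_expand Ch e ℓ hChs he hℓs
      (fun f ζ => Gbar Ch e ω f a c ζ) (fun ζ => sff Ch e n c a ζ)
      (fun f => contDiff_Gbar Ch e ω hChs he hωs f a c)
      (contDiff_sff Ch e n hChs he hns c a) b ξ
  simp only [hx]
  have h0 := hne ξ 0
  have h1 := hne ξ 1
  have h2 := hne ξ 2
  have h3 := hnl ξ
  simp only [Fin.sum_univ_four] at h0 h1 h2 h3
  have hsf : ∀ f : Fin 3, sff Ch e n b f ξ
      = -(n ξ 0 * cov Ch e b (e f) ξ 0 + n ξ 1 * cov Ch e b (e f) ξ 1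
        + n ξ 2 * cov Ch e b (e f) ξ 2 + n ξ 3 * cov Ch e b (e f) ξ 3) := by
    intro f; simp only [sff, Fin.sum_univ_four]
  have hphi : phiF Ch e n ℓ b ξ
      = n ξ 0 * cov Ch e b ℓ ξ 0 + n ξ 1 * cov Ch e b ℓ ξ 1
        + n ξ 2 * cov Ch e b ℓ ξ 2 + n ξ 3 * cov Ch e b ℓ ξ 3 := by
    simp only [phiF, Fin.sum_univ_four]
  simp only [Fin.sum_univ_four, Fin.sum_univ_three]
  linear_combination pd (fun ζ => Gbar Ch e ω 0 a c ζ) b ξ * h0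
    + pd (fun ζ => Gbar Ch e ω 1 a c ζ) b ξ * h1
    + pd (fun ζ => Gbar Ch e ω 2 a c ζ) b ξ * h2
    - pd (fun ζ => sff Ch e n c a ζ) b ξ * h3
    + Gbar Ch e ω 0 a c ξ * hsf 0 + Gbar Ch e ω 1 a c ξ * hsf 1
    + Gbar Ch e ω 2 a c ξ * hsf 2
    + sff Ch e n c a ξ * hphi

end

/-- Codazzi-1 equation for a rigged hypersurface:
`n_μ R^μ_{αβγ} e_a^α e_b^β e_c^γ = ∇̄_c K_{ba} - ∇̄_b K_{ca} + K_{ba} φ_c - K_{ca} φ_b`. -/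
theorem stmt7
    (Ch : (Fin 3 → ℝ) → Fin 4 → Fin 4 → Fin 4 → ℝ)
    (e : Fin 3 → (Fin 3 → ℝ) → Fin 4 → ℝ)
    (ℓ n : (Fin 3 → ℝ) → Fin 4 → ℝ)
    (ω : Fin 3 → (Fin 3 → ℝ) → Fin 4 → ℝ)
    (Riem : (Fin 3 → ℝ) → Fin 4 → Fin 4 → Fin 4 → Fin 4 → ℝ)
    (hChsym : ∀ ξ α β γ, Ch ξ α β γ = Ch ξ α γ β)
    (hesym : ∀ ξ a b μ, pd (fun ζ => e b ζ μ) a ξ = pd (fun ζ => e a ζ μ) b ξ)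
    (he : ∀ a μ, ContDiff ℝ (⊤ : ℕ∞) (fun ζ => e a ζ μ))
    (hℓs : ∀ μ, ContDiff ℝ (⊤ : ℕ∞) (fun ζ => ℓ ζ μ))
    (hns : ∀ μ, ContDiff ℝ (⊤ : ℕ∞) (fun ζ => n ζ μ))
    (hωs : ∀ a μ, ContDiff ℝ (⊤ : ℕ∞) (fun ζ => ω a ζ μ))
    (hChs : ∀ α β γ, ContDiff ℝ (⊤ : ℕ∞) (fun ζ => Ch ζ α β γ))
    (hne : ∀ ξ a, ∑ μ, n ξ μ * e a ξ μ = 0)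
    (hnl : ∀ ξ, ∑ μ, n ξ μ * ℓ ξ μ = 1)
    (hωl : ∀ ξ a, ∑ μ, ω a ξ μ * ℓ ξ μ = 0)
    (hωe : ∀ ξ a b, ∑ μ, ω a ξ μ * e b ξ μ = if a = b then (1 : ℝ) else 0)
    (hcomp : ∀ ξ μ ν, ℓ ξ μ * n ξ ν + ∑ a, e a ξ μ * ω a ξ ν
      = if μ = ν then (1 : ℝ) else 0)
    (hRic : ∀ (V : (Fin 3 → ℝ) → Fin 4 → ℝ),
      (∀ ρ, ContDiff ℝ (⊤ : ℕ∞) (fun ζ => V ζ ρ)) →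
      ∀ ξ a b μ, cov Ch e a (cov Ch e b V) ξ μ - cov Ch e b (cov Ch e a V) ξ μ
        = ∑ β, ∑ lam, ∑ σ, Riem ξ μ β lam σ * e a ξ lam * e b ξ σ * V ξ β) :
    ∀ ξ (a b c : Fin 3),
      (∑ μ, n ξ μ * ∑ α, ∑ β, ∑ γ,
        Riem ξ μ α β γ * e a ξ α * e b ξ β * e c ξ γ)
      = DbarT2 (fun ζ x y z => Gbar Ch e ω x y z ζ)
            (fun ζ x y => sff Ch e n x y ζ) c b a ξ
        - DbarT2 (fun ζ x y z => Gbar Ch e ω x y z ζ)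
            (fun ζ x y => sff Ch e n x y ζ) b c a ξ
        + sff Ch e n b a ξ * phiF Ch e n ℓ c ξ
        - sff Ch e n c a ξ * phiF Ch e n ℓ b ξ := by
  intro ξ a b c
  have hL : (∑ μ, n ξ μ * ∑ α, ∑ β, ∑ γ,
      Riem ξ μ α β γ * e a ξ α * e b ξ β * e c ξ γ)
      = (∑ μ, n ξ μ * cov Ch e b (cov Ch e c (e a)) ξ μ)
        - ∑ μ, n ξ μ * cov Ch e c (cov Ch e b (e a)) ξ μ := by
    rw [← Finset.sum_sub_distrib]
    refine Finset.sum_congr rfl fun μ _ => ?_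
    rw [← mul_sub, hRic (e a) (he a) ξ b c μ]
    congr 1
    simp only [Fin.sum_univ_four]
    ring
  rw [hL,
    key Ch e ℓ n ω hChs he hℓs hns hωs hne hnl hcomp ξ b c a,
    key Ch e ℓ n ω hChs he hℓs hns hωs hne hnl hcomp ξ c b a]
  have hGsym : ∀ f : Fin 3, Gbar Ch e ω f b c ξ = Gbar Ch e ω f c b ξ := by
    intro f
    unfold Gbar
    exact Finset.sum_congr rfl fun μ _ => by
      rw [covsym Ch e hChsym hesym ξ c b μ]
  simp only [DbarT2, Fin.sum_univ_three]
  rw [hGsym 0, hGsym 1, hGsym 2]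
  ring

end
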